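/- arXiv:2502.06611 — 4 statements merged into one kernel-verified Lean document; each statement's English description precedes it below -/
import Mathlib

section
/- Under condition (H1), the maps u ↦ t^+(u) and u ↦ t^-(u) are continuous on the unit sphere S of X. -/
/-!
Along each ray the derivative `g_u(t) = Φ'(t • u) u` of the fibering map vanishes only at
`t⁺(u) < t⁻(u)`, so by Darboux it has constant sign on each of `(0, t⁺)`, `(t⁺, t⁻)`, `(t⁻, ∞)`;
the local minimum and maximum force the pattern `-, +, -`. Since `g_v(t)` depends continuously
on `v`, a strict sign of `g_u` at a fixed `t` persists for `v` near `u`, and two such signs on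
either side of `t⁺(u)` (resp. `t⁻(u)`) trap `t⁺(v)` (resp. `t⁻(v)`) between them.
-/

open Metric Set Filter Topology

theorem IsLocalMin.not_strictMonoOn_Ioc {f : ℝ → ℝ} {a x : ℝ} (hf : IsLocalMin f a)
    (hx : x < a) : ¬ StrictMonoOn f (Ioc x a) := by
  intro hmono
  obtain ⟨y, hy, hfy⟩ :=
    (Filter.Eventually.and (Ioo_mem_nhdsLT hx) (hf.filter_mono nhdsWithin_le_nhds)).exists
  exact (hmono ⟨hy.1, hy.2.le⟩ ⟨hx, le_rfl⟩ hy.2).not_ge hfy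

theorem IsLocalMin.not_strictAntiOn_Ico {f : ℝ → ℝ} {a x : ℝ} (hf : IsLocalMin f a)
    (hx : a < x) : ¬ StrictAntiOn f (Ico a x) := by
  intro hanti
  obtain ⟨y, hy, hfy⟩ :=
    (Filter.Eventually.and (Ioo_mem_nhdsGT hx) (hf.filter_mono nhdsWithin_le_nhds)).exists
  exact (hanti ⟨le_rfl, hx⟩ ⟨hy.1.le, hy.2⟩ hy.1).not_ge hfy

theorem IsLocalMax.not_strictMonoOn_Ico {f : ℝ → ℝ} {a x : ℝ} (hf : IsLocalMax f a)
    (hx : a < x) : ¬ StrictMonoOn f (Ico a x) := fun hmono =>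
  hf.neg.not_strictAntiOn_Ico hx fun _ hy _ hz hyz => neg_lt_neg (hmono hy hz hyz)

section Darboux

variable {φ g : ℝ → ℝ} {s : Set ℝ}

theorem neg_of_not_strictMonoOn (hs : Convex ℝ s) (hφ : ∀ x ∈ s, HasDerivAt φ (g x) x)
    (hg : ∀ x ∈ interior s, g x ≠ 0) (hmono : ¬ StrictMonoOn φ s) :
    ∀ x ∈ interior s, g x < 0 := by
  have hderiv : ∀ x ∈ interior s, HasDerivWithinAt φ (g x) (interior s) x :=
    fun x hx => (hφ x (interior_subset hx)).hasDerivWithinAt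
  refine (hasDerivWithinAt_forall_lt_or_forall_gt_of_forall_ne hs.interior hderiv hg).resolve_right
    fun hpos => hmono ?_
  exact strictMonoOn_of_hasDerivWithinAt_pos hs
    (fun x hx => (hφ x hx).continuousAt.continuousWithinAt) hderiv hpos

theorem pos_of_not_strictAntiOn (hs : Convex ℝ s) (hφ : ∀ x ∈ s, HasDerivAt φ (g x) x)
    (hg : ∀ x ∈ interior s, g x ≠ 0) (hanti : ¬ StrictAntiOn φ s) :
    ∀ x ∈ interior s, 0 < g x := by
  have hderiv : ∀ x ∈ interior s, HasDerivWithinAt φ (g x) (interior s) x :=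
    fun x hx => (hφ x (interior_subset hx)).hasDerivWithinAt
  refine (hasDerivWithinAt_forall_lt_or_forall_gt_of_forall_ne hs.interior hderiv hg).resolve_left
    fun hneg => hanti ?_
  exact strictAntiOn_of_hasDerivWithinAt_neg hs
    (fun x hx => (hφ x hx).continuousAt.continuousWithinAt) hderiv hneg

end Darboux

structure SignPattern (g : ℝ → ℝ) (p m : ℝ) : Prop where
  pos : 0 < p
  lt : p < m
  pos_iff : ∀ t, 0 < t → (0 < g t ↔ p < t ∧ t < m)
  neg_iff : ∀ t, 0 < t → (g t < 0 ↔ t < p ∨ m < t)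

theorem signPattern_of_isLocalMin_of_isLocalMax {φ g : ℝ → ℝ} {a b : ℝ}
    (hφ : ∀ t, 0 < t → HasDerivAt φ (g t) t) (ha : 0 < a) (hab : a < b)
    (hmin : IsLocalMin φ a) (hmax : IsLocalMax φ b)
    (hzero : ∀ t, 0 < t → (g t = 0 ↔ t = a ∨ t = b)) : SignPattern g a b := by
  have hb : 0 < b := ha.trans hab
  have hne : ∀ t, 0 < t → t ≠ a → t ≠ b → g t ≠ 0 := fun t ht hta htb h =>
    ((hzero t ht).1 h).elim hta htb
  have hleft : ∀ t ∈ Ioo 0 a, g t < 0 := by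
    rw [← interior_Ioc]
    refine neg_of_not_strictMonoOn (convex_Ioc 0 a) (fun t ht => hφ t ht.1) ?_
      (hmin.not_strictMonoOn_Ioc ha)
    rw [interior_Ioc]
    exact fun t ht => hne t ht.1 ht.2.ne (ht.2.trans hab).ne
  have hmid : ∀ t ∈ Ioo a b, 0 < g t := by
    rw [← interior_Ico]
    refine pos_of_not_strictAntiOn (convex_Ico a b) (fun t ht => hφ t (ha.trans_le ht.1)) ?_
      (hmin.not_strictAntiOn_Ico hab)
    rw [interior_Ico]
    exact fun t ht => hne t (ha.trans ht.1) ht.1.ne' ht.2.ne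
  have hright : ∀ t ∈ Ioi b, g t < 0 := by
    rw [← interior_Ici]
    refine neg_of_not_strictMonoOn (convex_Ici b) (fun t ht => hφ t (hb.trans_le ht)) ?_
      fun hmono => hmax.not_strictMonoOn_Ico (lt_add_one b) (hmono.mono Ico_subset_Ici_self)
    rw [interior_Ici]
    exact fun t ht => hne t (hb.trans ht) (hab.trans ht).ne' ht.ne'
  exact ⟨ha, hab, fun t ht => by grind, fun t ht => by grind⟩

namespace SignPattern

variable {g : ℝ → ℝ} {p m : ℝ}

theorem mem_Ioo_of_neg_of_pos (h : SignPattern g p m) {t₁ t₂ : ℝ} (ht₁ : 0 < t₁)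
    (h₁₂ : t₁ < t₂) (hg₁ : g t₁ < 0) (hg₂ : 0 < g t₂) : p ∈ Ioo t₁ t₂ := by
  have h₂ := (h.pos_iff t₂ (ht₁.trans h₁₂)).1 hg₂
  rcases (h.neg_iff t₁ ht₁).1 hg₁ with h₁ | h₁
  · exact ⟨h₁, h₂.1⟩
  · linarith

theorem mem_Ioo_of_pos_of_neg (h : SignPattern g p m) {s₁ s₂ : ℝ} (hs₁ : 0 < s₁)
    (h₁₂ : s₁ < s₂) (hg₁ : 0 < g s₁) (hg₂ : g s₂ < 0) : m ∈ Ioo s₁ s₂ := by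
  have h₁ := (h.pos_iff s₁ hs₁).1 hg₁
  rcases (h.neg_iff s₂ (hs₁.trans h₁₂)).1 hg₂ with h₂ | h₂
  · linarith
  · exact ⟨h₁.2, h₂⟩

end SignPattern

theorem continuousAt_of_forall_eventually_mem_Ioo {α : Type*} [TopologicalSpace α]
    {f : α → ℝ} {x : α} {lo hi : ℝ} (hlo : lo < f x) (hhi : f x < hi)
    (h : ∀ l r, lo < l → l < f x → f x < r → r < hi → ∀ᶠ y in 𝓝 x, f y ∈ Ioo l r) :
    ContinuousAt f x := by
  refine tendsto_order.2 ⟨fun l hl => ?_, fun r hr => ?_⟩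
  · refine (h (max l ((lo + f x) / 2)) ((f x + hi) / 2) (lt_max_of_lt_right (by linarith))
      (max_lt hl (by linarith)) (by linarith) (by linarith)).mono fun y hy => ?_
    exact (le_max_left _ _).trans_lt hy.1
  · refine (h ((lo + f x) / 2) (min r ((f x + hi) / 2)) (by linarith) (by linarith)
      (lt_min hr (by linarith)) (min_lt_of_right_lt (by linarith))).mono fun y hy => ?_
    exact hy.2.trans_le (min_le_left _ _)

section Family

variable {α : Type*} [TopologicalSpace α] {g : α → ℝ → ℝ} {p m : α → ℝ} {x : α}

theorem continuousAt_of_signPattern_left (hg : ∀ t, 0 < t → ContinuousAt (fun y => g y t) x)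
    (hsign : ∀ᶠ y in 𝓝 x, SignPattern (g y) (p y) (m y)) : ContinuousAt p x := by
  have hx := hsign.self_of_nhds
  refine continuousAt_of_forall_eventually_mem_Ioo hx.pos hx.lt fun l r hl hlp hpr hrm => ?_
  have hgl : g x l < 0 := (hx.neg_iff l hl).2 (Or.inl hlp)
  have hgr : 0 < g x r := (hx.pos_iff r (hl.trans (hlp.trans hpr))).2 ⟨hpr, hrm⟩
  filter_upwards [hsign, (hg l hl).eventually_lt continuousAt_const hgl,
    continuousAt_const.eventually_lt (hg r (hl.trans (hlp.trans hpr))) hgr] with y hy hyl hyr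
  exact hy.mem_Ioo_of_neg_of_pos hl (hlp.trans hpr) hyl hyr

theorem continuousAt_of_signPattern_right (hg : ∀ t, 0 < t → ContinuousAt (fun y => g y t) x)
    (hsign : ∀ᶠ y in 𝓝 x, SignPattern (g y) (p y) (m y)) : ContinuousAt m x := by
  have hx := hsign.self_of_nhds
  refine continuousAt_of_forall_eventually_mem_Ioo hx.lt (lt_add_one (m x))
    fun l r hpl hlm hmr _ => ?_
  have hl : 0 < l := hx.pos.trans hpl
  have hgl : 0 < g x l := (hx.pos_iff l hl).2 ⟨hpl, hlm⟩
  have hgr : g x r < 0 := (hx.neg_iff r (hl.trans (hlm.trans hmr))).2 (Or.inr hmr)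
  filter_upwards [hsign, continuousAt_const.eventually_lt (hg l hl) hgl,
    (hg r (hl.trans (hlm.trans hmr))).eventually_lt continuousAt_const hgr] with y hy hyl hyr
  exact hy.mem_Ioo_of_pos_of_neg hl (hlm.trans hmr) hyl hyr

end Family

section Fibering

variable {X : Type*} [NormedAddCommGroup X] [NormedSpace ℝ X]

theorem hasDerivAt_comp_smul {Φ : X → ℝ} {Φ'x : X →L[ℝ] ℝ} {u : X} {t : ℝ}
    (hΦ : HasFDerivAt Φ Φ'x (t • u)) : HasDerivAt (fun s : ℝ => Φ (s • u)) (Φ'x u) t := by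
  have hsmul : HasDerivAt (fun s : ℝ => s • u) u t := by
    simpa using (hasDerivAt_id t).smul_const u
  exact hΦ.comp_hasDerivAt t hsmul

theorem continuousAt_apply_smul {Φ' : X → X →L[ℝ] ℝ} {u : X} {t : ℝ}
    (hΦ' : ContinuousAt Φ' (t • u)) : ContinuousAt (fun v => Φ' (t • v) v) u :=
  (hΦ'.comp (continuousAt_id.const_smul t)).clm_apply continuousAt_id

end Fibering

theorem statement_0_general
    {X : Type*} [NormedAddCommGroup X] [NormedSpace ℝ X]
    (Φ : X → ℝ) (Φ' : X → (X →L[ℝ] ℝ))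
    (hΦdiff : ∀ u : X, u ≠ 0 → HasFDerivAt Φ (Φ' u) u)
    (hΦcont : ContinuousOn Φ' {x : X | x ≠ 0})
    (tp tm : X → ℝ)
    -- (H1): for every `u ≠ 0`, the fibering map `t ↦ Φ(t • u)` (t > 0) has exactly two
    -- critical points `tp u < tm u`, a local minimum followed by a local maximum
    (h1pos : ∀ u : X, u ≠ 0 → 0 < tp u)
    (h1lt : ∀ u : X, u ≠ 0 → tp u < tm u)
    (h1min : ∀ u : X, u ≠ 0 → IsLocalMin (fun t : ℝ => Φ (t • u)) (tp u))
    (h1max : ∀ u : X, u ≠ 0 → IsLocalMax (fun t : ℝ => Φ (t • u)) (tm u))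
    (h1crit : ∀ u : X, u ≠ 0 → ∀ t : ℝ, 0 < t →
      (Φ' (t • u) u = 0 ↔ t = tp u ∨ t = tm u)) :
    ContinuousOn tp (sphere (0 : X) 1) ∧ ContinuousOn tm (sphere (0 : X) 1) := by
  have hsign : ∀ u : X, u ≠ 0 → SignPattern (fun t => Φ' (t • u) u) (tp u) (tm u) :=
    fun u hu => signPattern_of_isLocalMin_of_isLocalMax
      (fun t ht => hasDerivAt_comp_smul (hΦdiff _ (smul_ne_zero ht.ne' hu)))
      (h1pos u hu) (h1lt u hu) (h1min u hu) (h1max u hu) (h1crit u hu)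
  have hcont : ∀ u : X, u ≠ 0 → ∀ t : ℝ, 0 < t → ContinuousAt (fun v => Φ' (t • v) v) u :=
    fun u hu t ht => continuousAt_apply_smul
      (hΦcont.continuousAt (isOpen_ne.mem_nhds (smul_ne_zero ht.ne' hu)))
  have hsign_near : ∀ u : X, u ≠ 0 →
      ∀ᶠ v in 𝓝 u, SignPattern (fun t => Φ' (t • v) v) (tp v) (tm v) :=
    fun u hu => (isOpen_ne.eventually_mem hu).mono hsign
  have hu0 : ∀ u ∈ sphere (0 : X) 1, u ≠ 0 := fun u hu => ne_of_mem_sphere hu one_ne_zero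
  exact ⟨fun u hu => (continuousAt_of_signPattern_left (hcont u (hu0 u hu))
      (hsign_near u (hu0 u hu))).continuousWithinAt,
    fun u hu => (continuousAt_of_signPattern_right (hcont u (hu0 u hu))
      (hsign_near u (hu0 u hu))).continuousWithinAt⟩

/-- Under (H1), the maps `u ↦ t⁺(u)` and `u ↦ t⁻(u)` are continuous
on the unit sphere `S` of `X`. -/
theorem statement_0
    {X : Type*} [NormedAddCommGroup X] [NormedSpace ℝ X] [CompleteSpace X]
    [UniformConvexSpace X]
    (hinf : ¬ FiniteDimensional ℝ X)
    (hnorm : ContDiffOn ℝ 1 (fun x : X => ‖x‖) {x : X | x ≠ 0})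
    (Φ : X → ℝ) (Φ' : X → (X →L[ℝ] ℝ))
    (hΦdiff : ∀ u : X, u ≠ 0 → HasFDerivAt Φ (Φ' u) u)
    (hΦcont : ContinuousOn Φ' {x : X | x ≠ 0})
    (tp tm : X → ℝ)
    -- (H1): for every `u ≠ 0`, the fibering map `t ↦ Φ(t • u)` (t > 0) has exactly two
    -- critical points `tp u < tm u`, a local minimum followed by a local maximum
    (h1pos : ∀ u : X, u ≠ 0 → 0 < tp u)
    (h1lt : ∀ u : X, u ≠ 0 → tp u < tm u)
    (h1min : ∀ u : X, u ≠ 0 → IsLocalMin (fun t : ℝ => Φ (t • u)) (tp u))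
    (h1max : ∀ u : X, u ≠ 0 → IsLocalMax (fun t : ℝ => Φ (t • u)) (tm u))
    (h1crit : ∀ u : X, u ≠ 0 → ∀ t : ℝ, 0 < t →
      (Φ' (t • u) u = 0 ↔ t = tp u ∨ t = tm u))
    -- `tp` is bounded away from zero and above on compact subsets of the sphere
    (h1tp : ∀ K : Set X, K ⊆ sphere (0 : X) 1 → IsCompact K →
      ∃ a b : ℝ, 0 < a ∧ ∀ u ∈ K, a ≤ tp u ∧ tp u ≤ b)
    -- `tm` is bounded away from zero on the sphere and above on compact subsets
    (h1tm0 : ∃ a : ℝ, 0 < a ∧ ∀ u ∈ sphere (0 : X) 1, a ≤ tm u)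
    (h1tm1 : ∀ K : Set X, K ⊆ sphere (0 : X) 1 → IsCompact K →
      ∃ b : ℝ, ∀ u ∈ K, tm u ≤ b) :
    ContinuousOn tp (sphere (0 : X) 1) ∧ ContinuousOn tm (sphere (0 : X) 1) :=
  statement_0_general Φ Φ' hΦdiff hΦcont tp tm h1pos h1lt h1min h1max h1crit
end

section
/- Under condition (H1), the maps m^±: S → N^±(Φ) defined by m^±(u) := t^±(u)u are homeomorphisms from the unit sphere S onto N^±(Φ). -/
/-!
Along the ray through `u ≠ 0` the derivative `g_u(t) = Φ'(t • u) u` of the fibering map vanishes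
only at `t⁺(u) < t⁻(u)`; since `t⁺(u)` is a local minimum and `t⁻(u)` a local maximum, `g_u` is
negative, positive, negative on `(0, t⁺(u))`, `(t⁺(u), t⁻(u))`, `(t⁻(u), ∞)`. Strict signs of
`g_u(s)` at finitely many fixed `s` persist for nearby `u` by continuity of `Φ'`, which traps
`t^±` of nearby points near `t^±(u)`: so `t^±` are continuous. Then `u ↦ t(u) • u` is a
homeomorphism of the sphere onto its image, with inverse `x ↦ ‖x‖⁻¹ • x`.
-/

open Metric Set Filter Topology

theorem IsPreconnected.pos_of_ne_zero {α : Type*} [TopologicalSpace α] {s : Set α}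
    {g : α → ℝ} (hs : IsPreconnected s) (hg : ContinuousOn g s) (h0 : ∀ x ∈ s, g x ≠ 0)
    {x₀ : α} (hx₀ : x₀ ∈ s) (hpos : 0 < g x₀) : ∀ x ∈ s, 0 < g x := by
  intro x hx
  by_contra! hle
  obtain ⟨z, hz, hz0⟩ := hs.intermediate_value hx hx₀ hg ⟨hle, hpos.le⟩
  exact h0 z hz hz0

theorem IsPreconnected.neg_of_ne_zero {α : Type*} [TopologicalSpace α] {s : Set α}
    {g : α → ℝ} (hs : IsPreconnected s) (hg : ContinuousOn g s) (h0 : ∀ x ∈ s, g x ≠ 0)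
    {x₀ : α} (hx₀ : x₀ ∈ s) (hneg : g x₀ < 0) : ∀ x ∈ s, g x < 0 := fun x hx =>
  neg_pos.1 <| hs.pos_of_ne_zero hg.neg (fun y hy => neg_ne_zero.2 (h0 y hy)) hx₀
    (neg_pos.2 hneg) x hx

section LocalExtr

variable {f g : ℝ → ℝ} {a x y : ℝ}

theorem StrictMonoOn.not_isLocalMin_right (hxa : x < a) (hf : StrictMonoOn f (Icc x a)) :
    ¬IsLocalMin f a := fun hmin => by
  obtain ⟨t, hle, ht⟩ :=
    ((hmin.filter_mono nhdsWithin_le_nhds).and (Ioo_mem_nhdsLT hxa)).exists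
  exact (hf ⟨ht.1.le, ht.2.le⟩ (right_mem_Icc.2 hxa.le) ht.2).not_ge hle

theorem StrictAntiOn.not_isLocalMin_left (hay : a < y) (hf : StrictAntiOn f (Icc a y)) :
    ¬IsLocalMin f a := fun hmin => by
  obtain ⟨t, hle, ht⟩ :=
    ((hmin.filter_mono nhdsWithin_le_nhds).and (Ioo_mem_nhdsGT hay)).exists
  exact (hf (left_mem_Icc.2 hay.le) ⟨ht.1.le, ht.2.le⟩ ht.1).not_ge hle

theorem StrictMonoOn.not_isLocalMax_left (hay : a < y) (hf : StrictMonoOn f (Icc a y)) :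
    ¬IsLocalMax f a := fun hmax => hf.neg.not_isLocalMin_left hay hmax.neg

theorem strictMonoOn_Icc_of_hasDerivAt_pos (hf : ∀ t ∈ Icc x y, HasDerivAt f (g t) t)
    (hg : ∀ t ∈ Ioo x y, 0 < g t) : StrictMonoOn f (Icc x y) :=
  strictMonoOn_of_hasDerivWithinAt_pos (convex_Icc x y)
    (fun t ht => (hf t ht).continuousAt.continuousWithinAt)
    (fun t ht => (hf t (interior_subset ht)).hasDerivWithinAt)
    (by rwa [interior_Icc])

theorem strictAntiOn_Icc_of_hasDerivAt_neg (hf : ∀ t ∈ Icc x y, HasDerivAt f (g t) t)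
    (hg : ∀ t ∈ Ioo x y, g t < 0) : StrictAntiOn f (Icc x y) :=
  strictAntiOn_of_hasDerivWithinAt_neg (convex_Icc x y)
    (fun t ht => (hf t ht).continuousAt.continuousWithinAt)
    (fun t ht => (hf t (interior_subset ht)).hasDerivWithinAt)
    (by rwa [interior_Icc])

end LocalExtr

def SignNegPosNeg (g : ℝ → ℝ) (a b : ℝ) : Prop :=
  ∀ s, 0 < s → (0 < g s ↔ s ∈ Ioo a b) ∧ (g s < 0 ↔ s < a ∨ b < s)

section CriticalPoints

variable {f g : ℝ → ℝ} {a b : ℝ}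

theorem mem_Ioo_of_deriv_pos (ha : 0 < a) (hab : a < b)
    (hf : ∀ t, 0 < t → HasDerivAt f (g t) t) (hg : ContinuousOn g (Ioi 0))
    (hzero : ∀ t, 0 < t → (g t = 0 ↔ t = a ∨ t = b))
    (hmin : IsLocalMin f a) (hmax : IsLocalMax f b) {s : ℝ} (hs : 0 < s) (hgs : 0 < g s) :
    s ∈ Ioo a b := by
  have hsab : s ≠ a ∧ s ≠ b := not_or.1 fun h => hgs.ne' ((hzero s hs).2 h)
  by_contra hs_out
  rcases lt_or_gt_of_ne hsab.1 with hsa | has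
  · have hpos := isPreconnected_Ico.pos_of_ne_zero (hg.mono fun t ht => hs.trans_le ht.1)
      (fun t ht h0 => by grind [(hzero t (hs.trans_le ht.1)).1 h0]) (left_mem_Ico.2 hsa) hgs
    exact (strictMonoOn_Icc_of_hasDerivAt_pos (fun t ht => hf t (hs.trans_le ht.1))
      fun t ht => hpos t (Ioo_subset_Ico_self ht)).not_isLocalMin_right hsa hmin
  · have hb : 0 < b := ha.trans hab
    have hbs : b < s := by grind
    have hpos := isPreconnected_Ioc.pos_of_ne_zero (hg.mono fun t ht => hb.trans ht.1)
      (fun t ht h0 => by grind [(hzero t (hb.trans ht.1)).1 h0]) (right_mem_Ioc.2 hbs) hgs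
    exact (strictMonoOn_Icc_of_hasDerivAt_pos (fun t ht => hf t (hb.trans_le ht.1))
      fun t ht => hpos t (Ioo_subset_Ioc_self ht)).not_isLocalMax_left hbs hmax

theorem deriv_pos_of_mem_Ioo (ha : 0 < a)
    (hf : ∀ t, 0 < t → HasDerivAt f (g t) t) (hg : ContinuousOn g (Ioi 0))
    (hzero : ∀ t, 0 < t → (g t = 0 ↔ t = a ∨ t = b))
    (hmin : IsLocalMin f a) {s : ℝ} (hs : s ∈ Ioo a b) : 0 < g s := by
  have hne : ∀ t ∈ Ioc a s, g t ≠ 0 := fun t ht h0 => by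
    grind [(hzero t (ha.trans ht.1)).1 h0]
  refine lt_of_le_of_ne (not_lt.1 fun hgs => ?_) (hne s (right_mem_Ioc.2 hs.1)).symm
  have hneg := isPreconnected_Ioc.neg_of_ne_zero (hg.mono fun t ht => ha.trans ht.1) hne
    (right_mem_Ioc.2 hs.1) hgs
  exact (strictAntiOn_Icc_of_hasDerivAt_neg (fun t ht => hf t (ha.trans_le ht.1))
    fun t ht => hneg t (Ioo_subset_Ioc_self ht)).not_isLocalMin_left hs.1 hmin

theorem signNegPosNeg_of_isLocalMin_of_isLocalMax (ha : 0 < a) (hab : a < b)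
    (hf : ∀ t, 0 < t → HasDerivAt f (g t) t) (hg : ContinuousOn g (Ioi 0))
    (hzero : ∀ t, 0 < t → (g t = 0 ↔ t = a ∨ t = b))
    (hmin : IsLocalMin f a) (hmax : IsLocalMax f b) : SignNegPosNeg g a b := by
  intro s hs
  have hpos : 0 < g s ↔ s ∈ Ioo a b :=
    ⟨mem_Ioo_of_deriv_pos ha hab hf hg hzero hmin hmax hs,
      deriv_pos_of_mem_Ioo ha hf hg hzero hmin⟩
  have hne : g s ≠ 0 ↔ s ≠ a ∧ s ≠ b := by simp only [ne_eq, hzero s hs, not_or]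
  refine ⟨hpos, ⟨fun hgs => ?_, fun hout => ?_⟩⟩
  · have := hne.1 hgs.ne
    grind
  · have := hne.2 (by grind)
    grind

end CriticalPoints

theorem continuousAt_of_signNegPosNeg {α : Type*} [TopologicalSpace α] {G : α → ℝ → ℝ}
    {a b : α → ℝ} {u : α} (hsign : ∀ᶠ w in 𝓝 u, SignNegPosNeg (G w) (a w) (b w))
    (hG : ∀ s, 0 < s → ContinuousAt (fun w => G w s) u) (ha : 0 < a u) (hab : a u < b u) :
    ContinuousAt a u ∧ ContinuousAt b u := by
  have hu := hsign.self_of_nhds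
  have near_pos : ∀ s, 0 < s → s ∈ Ioo (a u) (b u) → ∀ᶠ w in 𝓝 u, s ∈ Ioo (a w) (b w) :=
    fun s hs hsu => by
      filter_upwards [hsign, (hG s hs).eventually_const_lt (((hu s hs).1).2 hsu)] with w hw hpos
      exact ((hw s hs).1).1 hpos
  have near_neg : ∀ s, 0 < s → (s < a u ∨ b u < s) → ∀ᶠ w in 𝓝 u, s < a w ∨ b w < s :=
    fun s hs hsu => by
      filter_upwards [hsign, (hG s hs).eventually_lt_const (((hu s hs).2).2 hsu)] with w hw hneg
      exact ((hw s hs).2).1 hneg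
  obtain ⟨m, hmu⟩ := nonempty_Ioo.2 hab
  have hm : ∀ᶠ w in 𝓝 u, m ∈ Ioo (a w) (b w) := near_pos m (ha.trans hmu.1) hmu
  refine ⟨tendsto_order.2 ⟨fun l hl => ?_, fun r hr => ?_⟩,
    tendsto_order.2 ⟨fun l hl => ?_, fun r hr => ?_⟩⟩
  · filter_upwards [near_neg (max l (a u / 2)) (by positivity) (.inl (by grind)), hm]
      with w hw hmw
    grind
  · filter_upwards [near_pos (min r m) (by grind) ⟨by grind, by grind⟩] with w hw
    grind
  · filter_upwards [near_pos (max l m) (by grind) ⟨by grind, by grind⟩] with w hw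
    grind
  · filter_upwards [near_neg r (by linarith) (.inr hr), hm] with w hw hmw
    grind

section Fibering

variable {X : Type*} [NormedAddCommGroup X] [NormedSpace ℝ X]

theorem continuousAt_fiberingDeriv {Φ' : X → X →L[ℝ] ℝ}
    (hΦcont : ContinuousOn Φ' {x : X | x ≠ 0}) {t : ℝ} {u : X} (ht : t ≠ 0) (hu : u ≠ 0) :
    ContinuousAt (fun p : ℝ × X => Φ' (p.1 • p.2) p.2) (t, u) :=
  ((hΦcont.continuousAt (isOpen_ne.mem_nhds (smul_ne_zero ht hu))).comp
    (f := fun p : ℝ × X => p.1 • p.2) (by fun_prop)).clm_apply continuousAt_snd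

theorem hasDerivAt_fibering {Φ : X → ℝ} {Φ' : X → X →L[ℝ] ℝ} {t : ℝ} {u : X}
    (hΦ : HasFDerivAt Φ (Φ' (t • u)) (t • u)) :
    HasDerivAt (fun s : ℝ => Φ (s • u)) (Φ' (t • u) u) t := by
  have hline : HasDerivAt (fun s : ℝ => s • u) u t := by
    simpa using (hasDerivAt_id t).smul_const u
  exact hΦ.comp_hasDerivAt t hline

end Fibering

theorem exists_homeomorph_sphere_image_smul {X : Type*} [NormedAddCommGroup X]
    [NormedSpace ℝ X] {t : X → ℝ} (hpos : ∀ u ∈ sphere (0 : X) 1, 0 < t u)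
    (hcont : ContinuousOn t (sphere (0 : X) 1)) :
    ∃ h : sphere (0 : X) 1 ≃ₜ ((fun u : X => t u • u) '' sphere (0 : X) 1),
      ∀ u : sphere (0 : X) 1, (h u : X) = t u • u := by
  have hnormalize : ∀ u ∈ sphere (0 : X) 1, ‖t u • u‖⁻¹ • (t u • u) = u := fun u hu => by
    rw [norm_smul, mem_sphere_zero_iff_norm.1 hu, Real.norm_of_nonneg (hpos u hu).le, mul_one,
      smul_smul, inv_mul_cancel₀ (hpos u hu).ne', one_smul]
  have hne : ∀ x ∈ (fun u : X => t u • u) '' sphere (0 : X) 1, x ≠ 0 := by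
    rintro _ ⟨u, hu, rfl⟩
    exact smul_ne_zero (hpos u hu).ne' (ne_zero_of_mem_unit_sphere ⟨u, hu⟩)
  have hmem : ∀ x : (fun u : X => t u • u) '' sphere (0 : X) 1,
      ‖(x : X)‖⁻¹ • (x : X) ∈ sphere (0 : X) 1 := by
    rintro ⟨_, ⟨u, hu, rfl⟩⟩
    rwa [hnormalize u hu]
  exact ⟨{
    toFun := fun u => ⟨t u • u, mem_image_of_mem _ u.2⟩
    invFun := fun x => ⟨‖(x : X)‖⁻¹ • (x : X), hmem x⟩
    left_inv := fun u => Subtype.ext (hnormalize u u.2)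
    right_inv := by
      rintro ⟨_, ⟨u, hu, rfl⟩⟩
      exact Subtype.ext (by simp only [hnormalize u hu])
    continuous_toFun := (hcont.domRestrict.smul continuous_subtype_val).subtype_mk _
    continuous_invFun :=
      ((continuousOn_id.norm.inv₀ fun x hx => norm_ne_zero_iff.2 (hne x hx)).smul
        continuousOn_id).domRestrict.subtype_mk hmem }, fun _ => rfl⟩

theorem statement_1_general
    {X : Type*} [NormedAddCommGroup X] [NormedSpace ℝ X]
    (Φ : X → ℝ) (Φ' : X → (X →L[ℝ] ℝ))
    (hΦdiff : ∀ u : X, u ≠ 0 → HasFDerivAt Φ (Φ' u) u)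
    (hΦcont : ContinuousOn Φ' {x : X | x ≠ 0})
    (tp tm : X → ℝ)
    (h1pos : ∀ u : X, u ≠ 0 → 0 < tp u)
    (h1lt : ∀ u : X, u ≠ 0 → tp u < tm u)
    (h1min : ∀ u : X, u ≠ 0 → IsLocalMin (fun t : ℝ => Φ (t • u)) (tp u))
    (h1max : ∀ u : X, u ≠ 0 → IsLocalMax (fun t : ℝ => Φ (t • u)) (tm u))
    (h1crit : ∀ u : X, u ≠ 0 → ∀ t : ℝ, 0 < t →
      (Φ' (t • u) u = 0 ↔ t = tp u ∨ t = tm u)) :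
    (∃ h : (sphere (0 : X) 1) ≃ₜ ((fun u : X => tp u • u) '' sphere (0 : X) 1),
       ∀ u : sphere (0 : X) 1, (h u : X) = tp (u : X) • (u : X)) ∧
    (∃ h : (sphere (0 : X) 1) ≃ₜ ((fun u : X => tm u • u) '' sphere (0 : X) 1),
       ∀ u : sphere (0 : X) 1, (h u : X) = tm (u : X) • (u : X)) := by
  have hsign : ∀ u : X, u ≠ 0 → SignNegPosNeg (fun t => Φ' (t • u) u) (tp u) (tm u) :=
    fun u hu => signNegPosNeg_of_isLocalMin_of_isLocalMax (h1pos u hu) (h1lt u hu)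
      (fun t ht => hasDerivAt_fibering (hΦdiff _ (smul_ne_zero ht.ne' hu)))
      (fun t ht => ((continuousAt_fiberingDeriv hΦcont ht.ne' hu).comp
        (f := fun t : ℝ => (t, u)) (by fun_prop)).continuousWithinAt)
      (h1crit u hu) (h1min u hu) (h1max u hu)
  have hcont : ∀ u : X, u ≠ 0 → ContinuousAt tp u ∧ ContinuousAt tm u := fun u hu =>
    continuousAt_of_signNegPosNeg ((eventually_ne_nhds hu).mono hsign)
      (fun s hs => (continuousAt_fiberingDeriv hΦcont hs.ne' hu).comp
        (f := fun w : X => (s, w)) (by fun_prop)) (h1pos u hu) (h1lt u hu)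
  have hS : ∀ u ∈ sphere (0 : X) 1, u ≠ 0 := fun u hu => ne_zero_of_mem_unit_sphere ⟨u, hu⟩
  exact ⟨exists_homeomorph_sphere_image_smul (fun u hu => h1pos u (hS u hu))
      fun u hu => (hcont u (hS u hu)).1.continuousWithinAt,
    exists_homeomorph_sphere_image_smul
      (fun u hu => (h1pos u (hS u hu)).trans (h1lt u (hS u hu)))
      fun u hu => (hcont u (hS u hu)).2.continuousWithinAt⟩

/-- Under (H1), `m^± : S → N^±(Φ)`, `m^±(u) = t^±(u) • u`, are
homeomorphisms from the unit sphere onto `N^±(Φ) = {t^±(u) • u : u ∈ S}`. -/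
theorem statement_1
    {X : Type*} [NormedAddCommGroup X] [NormedSpace ℝ X] [CompleteSpace X]
    [UniformConvexSpace X]
    (hinf : ¬ FiniteDimensional ℝ X)
    (hnorm : ContDiffOn ℝ 1 (fun x : X => ‖x‖) {x : X | x ≠ 0})
    (Φ : X → ℝ) (Φ' : X → (X →L[ℝ] ℝ))
    (hΦdiff : ∀ u : X, u ≠ 0 → HasFDerivAt Φ (Φ' u) u)
    (hΦcont : ContinuousOn Φ' {x : X | x ≠ 0})
    (tp tm : X → ℝ)
    (h1pos : ∀ u : X, u ≠ 0 → 0 < tp u)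
    (h1lt : ∀ u : X, u ≠ 0 → tp u < tm u)
    (h1min : ∀ u : X, u ≠ 0 → IsLocalMin (fun t : ℝ => Φ (t • u)) (tp u))
    (h1max : ∀ u : X, u ≠ 0 → IsLocalMax (fun t : ℝ => Φ (t • u)) (tm u))
    (h1crit : ∀ u : X, u ≠ 0 → ∀ t : ℝ, 0 < t →
      (Φ' (t • u) u = 0 ↔ t = tp u ∨ t = tm u))
    (h1tp : ∀ K : Set X, K ⊆ sphere (0 : X) 1 → IsCompact K →
      ∃ a b : ℝ, 0 < a ∧ ∀ u ∈ K, a ≤ tp u ∧ tp u ≤ b)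
    (h1tm0 : ∃ a : ℝ, 0 < a ∧ ∀ u ∈ sphere (0 : X) 1, a ≤ tm u)
    (h1tm1 : ∀ K : Set X, K ⊆ sphere (0 : X) 1 → IsCompact K →
      ∃ b : ℝ, ∀ u ∈ K, tm u ≤ b) :
    (∃ h : (sphere (0 : X) 1) ≃ₜ ((fun u : X => tp u • u) '' sphere (0 : X) 1),
       ∀ u : sphere (0 : X) 1, (h u : X) = tp (u : X) • (u : X)) ∧
    (∃ h : (sphere (0 : X) 1) ≃ₜ ((fun u : X => tm u • u) '' sphere (0 : X) 1),
       ∀ u : sphere (0 : X) 1, (h u : X) = tm (u : X) • (u : X)) :=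
  statement_1_general Φ Φ' hΦdiff hΦcont tp tm h1pos h1lt h1min h1max h1crit
end

section
/- Assume (F1) and 0 < −αc < h_0. Then for every u ∈ X∖{0} the map t ↦ λ_c(tu), t > 0, has exactly two critical points t_c^+(u) < t_c^-(u), with t_c^+(u) a local minimum point and t_c^-(u) a local maximum point; the maps u ↦ t_c^±(u) are bounded away from zero on the unit sphere S and bounded above on every compact subset of S; and the Nehari set N(λ_c) is bounded away from zero, i.e. inf_{u ∈ N(λ_c)} ‖u‖ > 0. -/
open Metric Set Filter Topology

/-- `H(u) = I₁'(u)u − α I₁(u)`. -/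
noncomputable def Hfun {X : Type*} [NormedAddCommGroup X] [NormedSpace ℝ X]
    (I1 : X → ℝ) (α : ℝ) (u : X) : ℝ :=
  fderiv ℝ I1 u u - α * I1 u

/-- `h₀ = inf_{u ≠ 0} sup_{t > 0} H(t u)`. -/
noncomputable def groundLevelH {X : Type*} [NormedAddCommGroup X] [NormedSpace ℝ X]
    (I1 : X → ℝ) (α : ℝ) : ℝ :=
  sInf ((fun u : X => sSup ((fun t : ℝ => Hfun I1 α (t • u)) '' Set.Ioi (0 : ℝ))) ''
    {u : X | u ≠ 0})

/-- `λ_c(u) = (I₁(u) − c) / I₂(u)`. -/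
noncomputable def lamFun {X : Type*} [NormedAddCommGroup X] [NormedSpace ℝ X]
    (I1 I2 : X → ℝ) (c : ℝ) (u : X) : ℝ :=
  (I1 u - c) / I2 u

/-- The Nehari set `N(λ_c) = {u ≠ 0 : H(u) + α c = 0}`. -/
noncomputable def nehariSet {X : Type*} [NormedAddCommGroup X] [NormedSpace ℝ X]
    (I1 : X → ℝ) (α c : ℝ) : Set X :=
  {u : X | u ≠ 0 ∧ Hfun I1 α u + α * c = 0}

/-!
Along the ray through `u` the fibering map `t ↦ λ_c(t u)` has derivative
`(H(t u) + α c) / (t^(α+1) I₂(u))`, so its critical points are the solutions of `H(t u) = -α c`.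
By (F1), `H(t u)` increases from `H(0) = 0` to its maximum, which is at least `h₀ > -α c`, and then
decreases below every level; hence the level `-α c` is crossed exactly twice, upward at a local
minimum of the fibering map and downward at a local maximum. As `H` is continuous with
`H(0) = 0 < -α c`, that level set avoids a ball around `0`: this bounds `t_c^±` below on the sphere
and `N(λ_c)` away from `0`. The decay of (F1), uniform on weakly compact sets, bounds `t_c^±` above
on compact subsets of the sphere.
-/

section RealProfile

variable {g : ℝ → ℝ} {β a b s : ℝ}

structure LevelCrossings (g : ℝ → ℝ) (β a b : ℝ) : Prop where
  pos : 0 < a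
  lt : a < b
  apply_left : g a = β
  apply_right : g b = β
  lt_of_mem_Ioo_zero : ∀ t ∈ Ioo 0 a, g t < β
  gt_of_mem_Ioo : ∀ t ∈ Ioo a b, β < g t
  lt_of_mem_Ioi : ∀ t ∈ Ioi b, g t < β

theorem LevelCrossings.eq_or_eq (h : LevelCrossings g β a b) {t : ℝ} (ht : 0 < t)
    (hgt : g t = β) : t = a ∨ t = b := by
  rcases lt_trichotomy t a with hta | rfl | hta
  · exact absurd hgt (h.lt_of_mem_Ioo_zero t ⟨ht, hta⟩).ne
  · exact Or.inl rfl
  rcases lt_trichotomy t b with htb | rfl | htb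
  · exact absurd hgt (h.gt_of_mem_Ioo t ⟨hta, htb⟩).ne'
  · exact Or.inr rfl
  · exact absurd hgt (h.lt_of_mem_Ioi t htb).ne

theorem isMaxOn_Ioi_of_strictMonoOn_of_strictAntiOn (hs : 0 < s)
    (hinc : StrictMonoOn g (Ioc 0 s)) (hdec : StrictAntiOn g (Ici s)) :
    IsMaxOn g (Ioi 0) s := by
  intro t (ht : 0 < t)
  rcases le_total t s with hts | hst
  · exact hinc.monotoneOn ⟨ht, hts⟩ ⟨hs, le_rfl⟩ hts
  · exact hdec.antitoneOn self_mem_Ici hst hst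

theorem sSup_image_Ioi_nonneg_of_tendsto (h : Tendsto g (𝓝[>] 0) (𝓝 0)) :
    0 ≤ sSup (g '' Ioi 0) := by
  by_cases hb : BddAbove (g '' Ioi 0)
  · refine le_of_tendsto h ?_
    filter_upwards [self_mem_nhdsWithin] with t ht
    exact le_csSup hb (mem_image_of_mem g ht)
  · rw [Real.sSup_of_not_bddAbove hb]

theorem levelCrossings_of_strictMonoOn_of_strictAntiOn (hg : ContinuousOn g (Ioi 0))
    (hs : 0 < s) (hinc : StrictMonoOn g (Ioc 0 s)) (hdec : StrictAntiOn g (Ici s))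
    (hzero : ∀ᶠ t in 𝓝[>] 0, g t < β) (htop : ∀ᶠ t in atTop, g t < β) (hβ : β < g s) :
    ∃ a b, LevelCrossings g β a b := by
  obtain ⟨ε, ⟨hεβ, hεs⟩, hε⟩ :=
    ((hzero.and (eventually_nhdsWithin_of_eventually_nhds (eventually_lt_nhds hs))).and
      self_mem_nhdsWithin).exists
  obtain ⟨T, hTβ, hsT⟩ := (htop.and (eventually_gt_atTop s)).exists
  obtain ⟨a, ⟨hεa, has⟩, hga⟩ : β ∈ g '' Ioo ε s :=
    intermediate_value_Ioo hεs.le (hg.mono fun t ht => hε.trans_le ht.1) ⟨hεβ, hβ⟩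
  obtain ⟨b, ⟨hsb, -⟩, hgb⟩ : β ∈ g '' Ioo s T :=
    intermediate_value_Ioo' hsT.le (hg.mono fun t ht => hs.trans_le ht.1) ⟨hTβ, hβ⟩
  have ha : 0 < a := (mem_Ioi.mp hε).trans hεa
  refine ⟨a, b, ha, has.trans hsb, hga, hgb, ?_, ?_, ?_⟩
  · rintro t ⟨ht, hta⟩
    exact hga ▸ hinc ⟨ht, (hta.trans has).le⟩ ⟨ha, has.le⟩ hta
  · rintro t ⟨hat, htb⟩
    rcases le_or_gt t s with hts | hst
    · exact hga ▸ hinc ⟨ha, has.le⟩ ⟨ha.trans hat, hts⟩ hat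
    · exact hgb ▸ hdec hst.le (hst.trans htb).le htb
  · intro t (hbt : b < t)
    exact hgb ▸ hdec hsb.le (hsb.trans hbt).le hbt

end RealProfile

section Fibering

variable {X : Type*} [NormedAddCommGroup X] [NormedSpace ℝ X] {I1 I2 : X → ℝ} {α c : ℝ}

theorem continuous_Hfun (hI1 : ContDiff ℝ 1 I1) : Continuous (Hfun I1 α) :=
  (isBoundedBilinearMap_apply.continuous.comp
    ((hI1.continuous_fderiv one_ne_zero).prodMk continuous_id)).sub
    (continuous_const.mul hI1.continuous)

theorem continuous_Hfun_smul (hI1 : ContDiff ℝ 1 I1) (u : X) :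
    Continuous fun t : ℝ => Hfun I1 α (t • u) :=
  (continuous_Hfun hI1).comp (continuous_id.smul continuous_const)

theorem tendsto_Hfun_smul_zero (hI1 : ContDiff ℝ 1 I1) (hI10 : I1 0 = 0) (u : X) :
    Tendsto (fun t : ℝ => Hfun I1 α (t • u)) (𝓝 0) (𝓝 0) := by
  simpa [Hfun, hI10] using (continuous_Hfun_smul (α := α) hI1 u).tendsto 0

theorem exists_pos_forall_norm_lt_Hfun_lt (hI1 : ContDiff ℝ 1 I1) (hI10 : I1 0 = 0)
    {β : ℝ} (hβ : 0 < β) : ∃ δ > 0, ∀ v : X, ‖v‖ < δ → Hfun I1 α v < β := by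
  have h0 : Hfun I1 α 0 < β := by simpa [Hfun, hI10] using hβ
  obtain ⟨δ, hδ, h⟩ := Metric.eventually_nhds_iff.mp
    ((continuous_Hfun hI1).continuousAt.eventually (gt_mem_nhds h0))
  exact ⟨δ, hδ, fun v hv => h (by simpa using hv)⟩

theorem groundLevelH_le_sSup (hI1 : ContDiff ℝ 1 I1) (hI10 : I1 0 = 0) {u : X} (hu : u ≠ 0) :
    groundLevelH I1 α ≤ sSup ((fun t : ℝ => Hfun I1 α (t • u)) '' Ioi 0) := by
  refine csInf_le ⟨0, ?_⟩ ⟨u, hu, rfl⟩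
  rintro _ ⟨v, -, rfl⟩
  exact sSup_image_Ioi_nonneg_of_tendsto
    ((tendsto_Hfun_smul_zero hI1 hI10 v).mono_left nhdsWithin_le_nhds)

theorem Hfun_smul (u : X) (t : ℝ) :
    Hfun I1 α (t • u) = t * fderiv ℝ I1 (t • u) u - α * I1 (t • u) := by
  rw [Hfun, map_smul, smul_eq_mul]

theorem hasDerivAt_lamFun_smul (hI1 : Differentiable ℝ I1) {u : X}
    (hI2 : ∀ r : ℝ, 0 < r → I2 (r • u) = r ^ α * I2 u) (hu : I2 u ≠ 0) {t : ℝ} (ht : 0 < t) :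
    HasDerivAt (fun r : ℝ => lamFun I1 I2 c (r • u))
      ((Hfun I1 α (t • u) + α * c) / (t ^ (α + 1) * I2 u)) t := by
  have hsmul : HasDerivAt (fun r : ℝ => r • u) u t := by
    simpa using (hasDerivAt_id t).smul_const u
  have hnum : HasDerivAt (fun r : ℝ => I1 (r • u) - c) (fderiv ℝ I1 (t • u) u) t :=
    ((hI1 (t • u)).hasFDerivAt.comp_hasDerivAt t hsmul).sub_const c
  have hden : HasDerivAt (fun r : ℝ => I2 (r • u)) (α * t ^ (α - 1) * I2 u) t := by
    refine ((Real.hasDerivAt_rpow_const (Or.inl ht.ne')).mul_const (I2 u)).congr_of_eventuallyEq ?_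
    filter_upwards [Ioi_mem_nhds ht] with r hr using hI2 r hr
  have hpow : t ^ α ≠ 0 := (Real.rpow_pos_of_pos ht α).ne'
  refine (hnum.div hden (by rw [hI2 t ht]; exact mul_ne_zero hpow hu)).congr_deriv ?_
  rw [hI2 t ht, Hfun_smul, Real.rpow_add ht, Real.rpow_sub ht, Real.rpow_one]
  field_simp
  ring

theorem exists_levelCrossings_Hfun_smul (hI1 : ContDiff ℝ 1 I1) (hI10 : I1 0 = 0)
    {u : X} (hu : u ≠ 0) {s β : ℝ} (hs : 0 < s)
    (hinc : StrictMonoOn (fun t : ℝ => Hfun I1 α (t • u)) (Ioc 0 s))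
    (hdec : StrictAntiOn (fun t : ℝ => Hfun I1 α (t • u)) (Ici s))
    (htop : ∀ᶠ t : ℝ in atTop, Hfun I1 α (t • u) < β) (hβ0 : 0 < β) (hβ : β < groundLevelH I1 α) :
    ∃ a b, LevelCrossings (fun t : ℝ => Hfun I1 α (t • u)) β a b := by
  have hmax := isMaxOn_Ioi_of_strictMonoOn_of_strictAntiOn hs hinc hdec
  have hsSup : sSup ((fun t : ℝ => Hfun I1 α (t • u)) '' Ioi 0) = Hfun I1 α (s • u) :=
    IsGreatest.csSup_eq ⟨mem_image_of_mem _ hs, forall_mem_image.2 hmax⟩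
  have hzero := tendsto_Hfun_smul_zero (α := α) hI1 hI10 u
  exact levelCrossings_of_strictMonoOn_of_strictAntiOn (continuous_Hfun_smul hI1 u).continuousOn
    hs hinc hdec ((hzero.eventually_lt_const hβ0).filter_mono nhdsWithin_le_nhds) htop
    (hβ.trans_le (hsSup ▸ groundLevelH_le_sSup hI1 hI10 hu))

theorem LevelCrossings.lamFun_smul (hI1 : Differentiable ℝ I1) {u : X}
    (hI2 : ∀ r : ℝ, 0 < r → I2 (r • u) = r ^ α * I2 u) (hu : 0 < I2 u) {a b : ℝ}
    (h : LevelCrossings (fun t : ℝ => Hfun I1 α (t • u)) (-(α * c)) a b) :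
    IsLocalMin (fun t : ℝ => lamFun I1 I2 c (t • u)) a ∧
      IsLocalMax (fun t : ℝ => lamFun I1 I2 c (t • u)) b ∧
      ∀ t : ℝ, 0 < t → (deriv (fun r : ℝ => lamFun I1 I2 c (r • u)) t = 0 ↔ t = a ∨ t = b) := by
  set φ := fun t : ℝ => lamFun I1 I2 c (t • u)
  have hφ : ∀ t : ℝ, 0 < t → HasDerivAt φ _ t :=
    fun t ht => hasDerivAt_lamFun_smul hI1 hI2 hu.ne' ht
  have hden : ∀ t : ℝ, 0 < t → 0 < t ^ (α + 1) * I2 u :=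
    fun t ht => mul_pos (Real.rpow_pos_of_pos ht _) hu
  have hdiff : ∀ {p q : ℝ}, 0 ≤ p → DifferentiableOn ℝ φ (Ioo p q) :=
    fun hp t ht => (hφ t (hp.trans_lt ht.1)).differentiableAt.differentiableWithinAt
  have hderiv_nonpos : ∀ t : ℝ, 0 < t → Hfun I1 α (t • u) < -(α * c) →
      deriv φ t ≤ 0 := fun t ht hlt => by
    rw [(hφ t ht).deriv]
    exact div_nonpos_of_nonpos_of_nonneg (by linarith) (hden t ht).le
  have hderiv_nonneg : ∀ t : ℝ, 0 < t → -(α * c) < Hfun I1 α (t • u) →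
      0 ≤ deriv φ t := fun t ht hlt => by
    rw [(hφ t ht).deriv]
    exact div_nonneg (by linarith) (hden t ht).le
  have hb : 0 < b := h.pos.trans h.lt
  refine ⟨isLocalMin_of_deriv_Ioo h.pos h.lt (hφ a h.pos).continuousAt (hdiff le_rfl)
      (hdiff h.pos.le) (fun t ht => hderiv_nonpos t ht.1 (h.lt_of_mem_Ioo_zero t ht))
      (fun t ht => hderiv_nonneg t (h.pos.trans ht.1) (h.gt_of_mem_Ioo t ht)),
    isLocalMax_of_deriv_Ioo h.lt (lt_add_one b) (hφ b hb).continuousAt (hdiff h.pos.le)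
      (hdiff hb.le) (fun t ht => hderiv_nonneg t (h.pos.trans ht.1) (h.gt_of_mem_Ioo t ht))
      (fun t ht => hderiv_nonpos t (hb.trans ht.1) (h.lt_of_mem_Ioi t ht.1)), fun t ht => ?_⟩
  rw [(hφ t ht).deriv, div_eq_zero_iff, or_iff_left (hden t ht).ne', add_eq_zero_iff_eq_neg]
  exact ⟨h.eq_or_eq ht, by rintro (rfl | rfl); exacts [h.apply_left, h.apply_right]⟩

theorem le_norm_of_Hfun_eq {δ β : ℝ} (hsmall : ∀ v : X, ‖v‖ < δ → Hfun I1 α v < β) {v : X}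
    (hv : Hfun I1 α v = β) : δ ≤ ‖v‖ :=
  not_lt.1 fun hlt => (hsmall v hlt).ne hv

theorem le_sInf_norm_nehariSet {δ : ℝ} (hsmall : ∀ v : X, ‖v‖ < δ → Hfun I1 α v < -(α * c))
    (hne : (nehariSet I1 α c).Nonempty) : δ ≤ sInf ((fun u : X => ‖u‖) '' nehariSet I1 α c) := by
  refine le_csInf (hne.image _) ?_
  rintro _ ⟨v, hv, rfl⟩
  exact le_norm_of_Hfun_eq hsmall (by linarith [hv.2])

end Fibering

theorem statement_5_general
    {X : Type*} [NormedAddCommGroup X] [NormedSpace ℝ X]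
    (hinf : ¬ FiniteDimensional ℝ X)
    (I1 I2 : X → ℝ) (α c : ℝ)
    (hI1C1 : ContDiff ℝ 1 I1)
    (hI10 : I1 0 = 0)
    (hI2pos : ∀ u : X, u ≠ 0 → 0 < I2 u)
    (hI2hom : ∀ t : ℝ, 0 < t → ∀ u : X, I2 (t • u) = t ^ α * I2 u)
    -- (F1)
    (s : X → ℝ)
    (hF1pos : ∀ u : X, u ≠ 0 → 0 < s u)
    (hF1inc : ∀ u : X, u ≠ 0 →
      StrictMonoOn (fun t : ℝ => Hfun I1 α (t • u)) (Set.Ioc 0 (s u)))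
    (hF1dec : ∀ u : X, u ≠ 0 →
      StrictAntiOn (fun t : ℝ => Hfun I1 α (t • u)) (Set.Ici (s u)))
    (hF1unif : ∀ W : Set X, W ⊆ {u : X | u ≠ 0} → IsCompact (toWeakSpace ℝ X '' W) →
      ∀ M : ℝ, ∃ T : ℝ, ∀ t : ℝ, T ≤ t → ∀ u ∈ W, Hfun I1 α (t • u) < M)
    -- `0 < −αc < h₀`
    (hc0 : 0 < -(α * c)) (hch : -(α * c) < groundLevelH I1 α) :
    ∃ tcp tcm : X → ℝ,
      (∀ u : X, u ≠ 0 →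
        0 < tcp u ∧ tcp u < tcm u ∧
        IsLocalMin (fun t : ℝ => lamFun I1 I2 c (t • u)) (tcp u) ∧
        IsLocalMax (fun t : ℝ => lamFun I1 I2 c (t • u)) (tcm u) ∧
        (∀ t : ℝ, 0 < t →
          (deriv (fun r : ℝ => lamFun I1 I2 c (r • u)) t = 0 ↔ t = tcp u ∨ t = tcm u))) ∧
      (∃ a : ℝ, 0 < a ∧ ∀ u ∈ sphere (0 : X) 1, a ≤ tcp u ∧ a ≤ tcm u) ∧
      (∀ K : Set X, K ⊆ sphere (0 : X) 1 → IsCompact K →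
        ∃ b : ℝ, ∀ u ∈ K, tcp u ≤ b ∧ tcm u ≤ b) ∧
      0 < sInf ((fun u : X => ‖u‖) '' nehariSet I1 α c) := by
  have hcross : ∀ u : X, u ≠ 0 → ∃ a b,
      LevelCrossings (fun t : ℝ => Hfun I1 α (t • u)) (-(α * c)) a b := fun u hu => by
    obtain ⟨T, hT⟩ := hF1unif {u} (singleton_subset_iff.2 hu) (by simp) (-(α * c))
    exact exists_levelCrossings_Hfun_smul hI1C1 hI10 hu (hF1pos u hu) (hF1inc u hu)
      (hF1dec u hu) (eventually_atTop.2 ⟨T, fun t ht => hT t ht u rfl⟩) hc0 hch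
  choose! tcp tcm htc using hcross
  obtain ⟨δ, hδ, hsmall⟩ := exists_pos_forall_norm_lt_Hfun_lt (α := α) hI1C1 hI10 hc0
  have hδle_smul : ∀ u ∈ sphere (0 : X) 1, ∀ t : ℝ, 0 < t →
      Hfun I1 α (t • u) = -(α * c) → δ ≤ t := fun u hu t ht h => by
    simpa [norm_smul, abs_of_pos ht, mem_sphere_zero_iff_norm.1 hu] using
      le_norm_of_Hfun_eq hsmall h
  refine ⟨tcp, tcm, fun u hu => ?_, ⟨δ, hδ, fun u hu => ?_⟩, fun K hK hKc => ?_, ?_⟩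
  · have h := htc u hu
    exact ⟨h.pos, h.lt,
      h.lamFun_smul hI1C1.differentiable_one (fun r hr => hI2hom r hr u) (hI2pos u hu)⟩
  · have h := htc u (ne_zero_of_mem_unit_sphere ⟨u, hu⟩)
    exact ⟨hδle_smul u hu _ h.pos h.apply_left, hδle_smul u hu _ (h.pos.trans h.lt) h.apply_right⟩
  · have hK0 : K ⊆ {u : X | u ≠ 0} := fun u hu => ne_zero_of_mem_unit_sphere ⟨u, hK hu⟩
    obtain ⟨T, hT⟩ := hF1unif K hK0 (hKc.image (toWeakSpaceCLM ℝ X).continuous) (-(α * c))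
    refine ⟨T, fun u hu => ?_⟩
    have h := htc u (hK0 hu)
    have htcm : tcm u ≤ T := not_lt.1 fun hlt => (hT _ hlt.le u hu).ne h.apply_right
    exact ⟨h.lt.le.trans htcm, htcm⟩
  · have : Nontrivial X := not_subsingleton_iff_nontrivial.1 fun _ => hinf inferInstance
    obtain ⟨u, hu⟩ := exists_ne (0 : X)
    have h := htc u hu
    exact hδ.trans_le <| le_sInf_norm_nehariSet hsmall
      ⟨_, smul_ne_zero h.pos.ne' hu, by rw [h.apply_left]; ring⟩

/-- under (F1) and `0 < −αc < h₀`, every fibering map `t ↦ λ_c(tu)` has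
exactly two critical points `t_c⁺(u) < t_c⁻(u)` (a local minimum followed by a local
maximum), the maps `t_c^±` are bounded away from zero on the unit sphere and bounded
above on its compact subsets, and `N(λ_c)` is bounded away from zero. -/
theorem statement_5
    {X : Type*} [NormedAddCommGroup X] [NormedSpace ℝ X] [CompleteSpace X]
    [UniformConvexSpace X]
    (hinf : ¬ FiniteDimensional ℝ X)
    (hnorm : ContDiffOn ℝ 1 (fun x : X => ‖x‖) {x : X | x ≠ 0})
    (I1 I2 : X → ℝ) (α c : ℝ)
    (hI1C1 : ContDiff ℝ 1 I1) (hI2C1 : ContDiff ℝ 1 I2)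
    (hI10 : I1 0 = 0) (hI20 : I2 0 = 0)
    (hI2pos : ∀ u : X, u ≠ 0 → 0 < I2 u)
    (hα : 1 < α)
    (hI2hom : ∀ t : ℝ, 0 < t → ∀ u : X, I2 (t • u) = t ^ α * I2 u)
    -- `I₂'` is completely continuous
    (hI2cc : ∀ (u : ℕ → X) (w : X),
      (∀ f : X →L[ℝ] ℝ, Tendsto (fun n => f (u n)) atTop (nhds (f w))) →
      Tendsto (fun n => fderiv ℝ I2 (u n)) atTop (nhds (fderiv ℝ I2 w)))
    -- (F1)
    (s : X → ℝ)
    (hF1pos : ∀ u : X, u ≠ 0 → 0 < s u)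
    (hF1inc : ∀ u : X, u ≠ 0 →
      StrictMonoOn (fun t : ℝ => Hfun I1 α (t • u)) (Set.Ioc 0 (s u)))
    (hF1dec : ∀ u : X, u ≠ 0 →
      StrictAntiOn (fun t : ℝ => Hfun I1 α (t • u)) (Set.Ici (s u)))
    (hF1unif : ∀ W : Set X, W ⊆ {u : X | u ≠ 0} → IsCompact (toWeakSpace ℝ X '' W) →
      ∀ M : ℝ, ∃ T : ℝ, ∀ t : ℝ, T ≤ t → ∀ u ∈ W, Hfun I1 α (t • u) < M)
    -- `0 < −αc < h₀`
    (hc0 : 0 < -(α * c)) (hch : -(α * c) < groundLevelH I1 α) :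
    ∃ tcp tcm : X → ℝ,
      (∀ u : X, u ≠ 0 →
        0 < tcp u ∧ tcp u < tcm u ∧
        IsLocalMin (fun t : ℝ => lamFun I1 I2 c (t • u)) (tcp u) ∧
        IsLocalMax (fun t : ℝ => lamFun I1 I2 c (t • u)) (tcm u) ∧
        (∀ t : ℝ, 0 < t →
          (deriv (fun r : ℝ => lamFun I1 I2 c (r • u)) t = 0 ↔ t = tcp u ∨ t = tcm u))) ∧
      (∃ a : ℝ, 0 < a ∧ ∀ u ∈ sphere (0 : X) 1, a ≤ tcp u ∧ a ≤ tcm u) ∧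
      (∀ K : Set X, K ⊆ sphere (0 : X) 1 → IsCompact K →
        ∃ b : ℝ, ∀ u ∈ K, tcp u ≤ b ∧ tcm u ≤ b) ∧
      0 < sInf ((fun u : X => ‖u‖) '' nehariSet I1 α c) :=
  statement_5_general hinf I1 I2 α c hI1C1 hI10 hI2pos hI2hom s hF1pos hF1inc hF1dec hF1unif hc0 hch
end

section
/- For every u ∈ X∖{0}: (1) if 0 < λ < λ(u) then the map t ↦ Φ_λ(tu), t > 0, has exactly two critical points t^+(u) < t^-(u), with t^+(u) a local minimum point and t^-(u) a local maximum point; (2) if λ = λ(u) then this map has exactly one critical point, which is degenerate (i.e. the first and second derivatives in t both vanish there); (3) if λ > λ(u) then this map has no critical point. -/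
/-!
Along the ray through `u`, homogeneity gives `d/dt Φ_λ(tu) = t^(α-1) (ψ(t) - λ A(u))` with
`ψ(t) = E(u) t^(η-α) - B(u) t^(β-α)`, the numerator of the nonlinear Rayleigh quotient
`(E(tu) - B(tu)) / A(tu)`; critical points are the solutions of `ψ(t) = λ A(u)`.
Since `0 < η - α < β - α`, `ψ` vanishes at `0`, increases strictly up to a single peak `T`
with `ψ'(T) = 0`, and then decreases strictly through `0`; its peak value is `ψ(T) = λ(u) A(u)`.
So the level `λ A(u)` is crossed twice when `λ < λ(u)` (upwards at a local minimum, downwards at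
a local maximum), touched only at `T` when `λ = λ(u)`, where `ψ - λ A(u)` and `ψ'`
both vanish, hence so does the second derivative, and never reached when `λ > λ(u)`.
-/

open Metric Set Filter Topology

/-- `Φ_λ(u) = (1/η) E(u) − (λ/α) A(u) − (1/β) B(u)`. -/
noncomputable def PhiLam {X : Type*} [NormedAddCommGroup X] [NormedSpace ℝ X]
    (E A B : X → ℝ) (α η β l : ℝ) (u : X) : ℝ :=
  (1 / η) * E u - (l / α) * A u - (1 / β) * B u

/-- `λ(u) = C(α,η,β) E(u)^{(β−α)/(β−η)} / (A(u) B(u)^{(η−α)/(β−η)})`, where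
`C(α,η,β) = ((β−η)/(β−α))((η−α)/(β−α))^{(η−α)/(β−η)}`. -/
noncomputable def lamOf {X : Type*} [NormedAddCommGroup X] [NormedSpace ℝ X]
    (E A B : X → ℝ) (α η β : ℝ) (u : X) : ℝ :=
  ((β - η) / (β - α)) * ((η - α) / (β - α)) ^ ((η - α) / (β - η)) *
    E u ^ ((β - α) / (β - η)) / (A u * B u ^ ((η - α) / (β - η)))

/-- `Λ = inf_{u ≠ 0} λ(u)`. -/
noncomputable def bigLam {X : Type*} [NormedAddCommGroup X] [NormedSpace ℝ X]
    (E A B : X → ℝ) (α η β : ℝ) : ℝ :=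
  sInf ((lamOf E A B α η β) '' {u : X | u ≠ 0})

open Real

noncomputable def rayleighNum (e b p q t : ℝ) : ℝ := e * t ^ p - b * t ^ q

-- The zero of the derivative `t^(p-1) (p e - q b t^(q-p))` of `rayleighNum e b p q`.
noncomputable def rayleighPeak (e b p q : ℝ) : ℝ := (p * e / (q * b)) ^ (q - p)⁻¹

theorem exists_crossings_of_strictMonoOn_strictAntiOn {f : ℝ → ℝ} {T z c : ℝ} (hT : 0 ≤ T)
    (hTz : T ≤ z) (hf : ContinuousOn f (Icc 0 z)) (hmono : StrictMonoOn f (Icc 0 T))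
    (hanti : StrictAntiOn f (Ici T)) (h0 : f 0 < c) (hz : f z < c) (hc : c < f T) :
    ∃ t₁ t₂, 0 < t₁ ∧ t₁ < t₂ ∧ (∀ t, 0 ≤ t → t < t₁ → f t < c) ∧
      (∀ t, t₁ < t → t < t₂ → c < f t) ∧ (∀ t, t₂ < t → f t < c) ∧
      ∀ t, 0 ≤ t → (f t = c ↔ t = t₁ ∨ t = t₂) := by
  obtain ⟨t₁, ⟨ht₁0, ht₁T⟩, hft₁⟩ :=
    intermediate_value_Icc hT (hf.mono (Icc_subset_Icc_right hTz)) ⟨h0.le, hc.le⟩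
  obtain ⟨t₂, ⟨hTt₂, -⟩, hft₂⟩ :=
    intermediate_value_Icc' hTz (hf.mono (Icc_subset_Icc_left hT)) ⟨hz.le, hc.le⟩
  have ht₁T : t₁ < T := ht₁T.lt_of_ne (by rintro rfl; exact hc.ne hft₁.symm)
  have hTt₂ : T < t₂ := hTt₂.lt_of_ne (by rintro rfl; exact hc.ne hft₂.symm)
  have hbelow : ∀ t, 0 ≤ t → t < t₁ → f t < c := fun t ht htt₁ =>
    hft₁ ▸ hmono ⟨ht, (htt₁.trans ht₁T).le⟩ ⟨ht₁0, ht₁T.le⟩ htt₁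
  have habove : ∀ t, t₁ < t → t < t₂ → c < f t := by
    intro t ht₁t htt₂
    rcases le_or_gt t T with htT | hTt
    · exact hft₁ ▸ hmono ⟨ht₁0, ht₁T.le⟩ ⟨ht₁0.trans ht₁t.le, htT⟩ ht₁t
    · exact hft₂ ▸ hanti hTt.le hTt₂.le htt₂
  have hbeyond : ∀ t, t₂ < t → f t < c := fun t ht₂t =>
    hft₂ ▸ hanti hTt₂.le (hTt₂.trans ht₂t).le ht₂t
  refine ⟨t₁, t₂, ht₁0.lt_of_ne (by rintro rfl; exact h0.ne hft₁), ht₁T.trans hTt₂, hbelow,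
    habove, hbeyond, fun t ht => ⟨fun hft => ?_, by rintro (rfl | rfl) <;> assumption⟩⟩
  rcases lt_trichotomy t t₁ with h | h | h
  · exact absurd hft (hbelow t ht h).ne
  · exact .inl h
  rcases lt_trichotomy t t₂ with h' | h' | h'
  · exact absurd hft (habove t h h').ne'
  · exact .inr h'
  · exact absurd hft (hbeyond t h').ne

section RayleighNum

variable {e b p q : ℝ}

theorem continuous_rayleighNum (hp : 0 ≤ p) (hq : 0 ≤ q) : Continuous (rayleighNum e b p q) :=
  (continuous_const.mul (continuous_rpow_const hp)).sub
    (continuous_const.mul (continuous_rpow_const hq))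

theorem rayleighNum_zero (hp : p ≠ 0) (hq : q ≠ 0) : rayleighNum e b p q 0 = 0 := by
  simp [rayleighNum, zero_rpow hp, zero_rpow hq]

theorem hasDerivAt_rayleighNum {t : ℝ} (ht : 0 < t) :
    HasDerivAt (rayleighNum e b p q) (t ^ (p - 1) * (p * e - q * b * t ^ (q - p))) t := by
  refine (((hasDerivAt_rpow_const (Or.inl ht.ne')).const_mul e).sub
    ((hasDerivAt_rpow_const (Or.inl ht.ne')).const_mul b)).congr_deriv ?_
  rw [show q - 1 = (p - 1) + (q - p) by ring, rpow_add ht]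
  ring

variable (he : 0 < e) (hb : 0 < b) (hp : 0 < p) (hpq : p < q)
include he hb hp hpq

theorem rayleighPeak_pos : 0 < rayleighPeak e b p q :=
  rpow_pos_of_pos (div_pos (mul_pos hp he) (mul_pos (hp.trans hpq) hb)) _

theorem rayleighPeak_rpow : rayleighPeak e b p q ^ (q - p) = p * e / (q * b) :=
  rpow_inv_rpow (div_pos (mul_pos hp he) (mul_pos (hp.trans hpq) hb)).le (sub_pos.2 hpq).ne'

theorem lt_rayleighPeak_iff {t : ℝ} (ht : 0 ≤ t) :
    t < rayleighPeak e b p q ↔ q * b * t ^ (q - p) < p * e := by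
  rw [← rpow_lt_rpow_iff ht (rayleighPeak_pos he hb hp hpq).le (sub_pos.2 hpq),
    rayleighPeak_rpow he hb hp hpq, lt_div_iff₀ (mul_pos (hp.trans hpq) hb), mul_comm (t ^ _)]

theorem rayleighPeak_lt_iff {t : ℝ} (ht : 0 ≤ t) :
    rayleighPeak e b p q < t ↔ p * e < q * b * t ^ (q - p) := by
  rw [← rpow_lt_rpow_iff (rayleighPeak_pos he hb hp hpq).le ht (sub_pos.2 hpq),
    rayleighPeak_rpow he hb hp hpq, div_lt_iff₀ (mul_pos (hp.trans hpq) hb), mul_comm (t ^ _)]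

theorem strictMonoOn_rayleighNum :
    StrictMonoOn (rayleighNum e b p q) (Icc 0 (rayleighPeak e b p q)) := by
  refine strictMonoOn_of_deriv_pos (convex_Icc _ _)
    (continuous_rayleighNum hp.le (hp.trans hpq).le).continuousOn fun t ht => ?_
  rw [interior_Icc] at ht
  rw [(hasDerivAt_rayleighNum ht.1).deriv]
  exact mul_pos (rpow_pos_of_pos ht.1 _)
    (sub_pos.2 ((lt_rayleighPeak_iff he hb hp hpq ht.1.le).1 ht.2))

theorem strictAntiOn_rayleighNum :
    StrictAntiOn (rayleighNum e b p q) (Ici (rayleighPeak e b p q)) := by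
  refine strictAntiOn_of_deriv_neg (convex_Ici _)
    (continuous_rayleighNum hp.le (hp.trans hpq).le).continuousOn fun t ht => ?_
  rw [interior_Ici] at ht
  have ht0 : 0 < t := (rayleighPeak_pos he hb hp hpq).trans ht
  rw [(hasDerivAt_rayleighNum ht0).deriv]
  exact mul_neg_of_pos_of_neg (rpow_pos_of_pos ht0 _)
    (sub_neg.2 ((rayleighPeak_lt_iff he hb hp hpq ht0.le).1 ht))

theorem rayleighNum_lt_rayleighNum_rayleighPeak {t : ℝ} (ht : 0 ≤ t)
    (hne : t ≠ rayleighPeak e b p q) :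
    rayleighNum e b p q t < rayleighNum e b p q (rayleighPeak e b p q) := by
  have hT := rayleighPeak_pos he hb hp hpq
  rcases hne.lt_or_gt with hlt | hgt
  · exact strictMonoOn_rayleighNum he hb hp hpq ⟨ht, hlt.le⟩ ⟨hT.le, le_rfl⟩ hlt
  · exact strictAntiOn_rayleighNum he hb hp hpq self_mem_Ici hgt.le hgt

theorem hasDerivAt_rayleighNum_rayleighPeak :
    HasDerivAt (rayleighNum e b p q) 0 (rayleighPeak e b p q) := by
  refine (hasDerivAt_rayleighNum (rayleighPeak_pos he hb hp hpq)).congr_deriv ?_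
  have hq : q ≠ 0 := (hp.trans hpq).ne'
  rw [rayleighPeak_rpow he hb hp hpq]
  field_simp
  ring

theorem rayleighNum_rayleighPeak :
    rayleighNum e b p q (rayleighPeak e b p q) =
      (q - p) / q * (p / q) ^ (p / (q - p)) * e ^ (q / (q - p)) / b ^ (p / (q - p)) := by
  have hr : q - p ≠ 0 := (sub_pos.2 hpq).ne'
  have hq : 0 < q := hp.trans hpq
  have hK : p * e / (q * b) = p / q * (e / b) := by ring
  have hK0 : 0 < p / q * (e / b) := by positivity
  have hσ : q / (q - p) = p / (q - p) + 1 := by field_simp; ring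
  rw [rayleighNum, rayleighPeak, hK, ← rpow_mul hK0.le, ← rpow_mul hK0.le,
    show (q - p)⁻¹ * q = p / (q - p) + 1 by rw [← hσ]; ring,
    show (q - p)⁻¹ * p = p / (q - p) by ring,
    rpow_add_one hK0.ne', mul_rpow (by positivity) (by positivity), div_rpow he.le hb.le, hσ,
    rpow_add_one he.ne']
  field_simp

theorem exists_rayleighPeak_lt_rayleighNum_eq_zero :
    ∃ z, rayleighPeak e b p q < z ∧ rayleighNum e b p q z = 0 := by
  have hr : 0 < q - p := sub_pos.2 hpq
  set z := (e / b) ^ (q - p)⁻¹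
  have hz : 0 < z := rpow_pos_of_pos (by positivity) _
  have hzr : z ^ (q - p) = e / b := rpow_inv_rpow (by positivity) hr.ne'
  refine ⟨z, (rayleighPeak_lt_iff he hb hp hpq hz.le).2 ?_, ?_⟩
  · rw [hzr, mul_assoc, mul_div_cancel₀ _ hb.ne']
    exact mul_lt_mul_of_pos_right hpq he
  · rw [rayleighNum, show q = p + (q - p) by ring, rpow_add hz, hzr]
    field_simp
    ring

theorem exists_rayleighNum_crossings {c : ℝ} (hc0 : 0 < c)
    (hc : c < rayleighNum e b p q (rayleighPeak e b p q)) :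
    ∃ t₁ t₂, 0 < t₁ ∧ t₁ < t₂ ∧ (∀ t, 0 ≤ t → t < t₁ → rayleighNum e b p q t < c) ∧
      (∀ t, t₁ < t → t < t₂ → c < rayleighNum e b p q t) ∧
      (∀ t, t₂ < t → rayleighNum e b p q t < c) ∧
      ∀ t, 0 ≤ t → (rayleighNum e b p q t = c ↔ t = t₁ ∨ t = t₂) := by
  obtain ⟨z, hTz, hz⟩ := exists_rayleighPeak_lt_rayleighNum_eq_zero he hb hp hpq
  exact exists_crossings_of_strictMonoOn_strictAntiOn (rayleighPeak_pos he hb hp hpq).le hTz.le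
    (continuous_rayleighNum hp.le (hp.trans hpq).le).continuousOn
    (strictMonoOn_rayleighNum he hb hp hpq) (strictAntiOn_rayleighNum he hb hp hpq)
    (by rwa [rayleighNum_zero hp.ne' (hp.trans hpq).ne']) (by rwa [hz]) hc

end RayleighNum

theorem hasDerivAt_fibering_s16 {e a b α η β l t : ℝ} (hα : α ≠ 0) (hη : η ≠ 0) (hβ : β ≠ 0)
    (ht : 0 < t) :
    HasDerivAt (fun s => 1 / η * (s ^ η * e) - l / α * (s ^ α * a) - 1 / β * (s ^ β * b))
      (t ^ (α - 1) * (rayleighNum e b (η - α) (β - α) t - l * a)) t := by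
  refine ((((hasDerivAt_rpow_const (Or.inl ht.ne')).mul_const e).const_mul _).sub
    (((hasDerivAt_rpow_const (Or.inl ht.ne')).mul_const a).const_mul _) |>.sub
    (((hasDerivAt_rpow_const (Or.inl ht.ne')).mul_const b).const_mul _)).congr_deriv ?_
  rw [rayleighNum, show η - 1 = (α - 1) + (η - α) by ring,
    show β - 1 = (α - 1) + (β - α) by ring, rpow_add ht, rpow_add ht]
  field_simp
  ring

theorem hasDerivAt_PhiLam_smul {X : Type*} [NormedAddCommGroup X] [NormedSpace ℝ X]
    {A B E : X → ℝ} {α η β l t : ℝ} {u : X}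
    (hAhom : ∀ t : ℝ, 0 < t → ∀ u : X, u ≠ 0 → A (t • u) = t ^ α * A u)
    (hBhom : ∀ t : ℝ, 0 < t → ∀ u : X, u ≠ 0 → B (t • u) = t ^ β * B u)
    (hEhom : ∀ t : ℝ, 0 < t → ∀ u : X, u ≠ 0 → E (t • u) = t ^ η * E u)
    (hα : α ≠ 0) (hη : η ≠ 0) (hβ : β ≠ 0) (hu : u ≠ 0) (ht : 0 < t) :
    HasDerivAt (fun s : ℝ => PhiLam E A B α η β l (s • u))
      (t ^ (α - 1) * (rayleighNum (E u) (B u) (η - α) (β - α) t - l * A u)) t :=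
  (hasDerivAt_fibering_s16 hα hη hβ ht).congr_of_eventuallyEq <|
    eventually_of_mem (Ioi_mem_nhds ht) fun s hs => by
      simp only [PhiLam, hAhom s hs u hu, hBhom s hs u hu, hEhom s hs u hu]

section CriticalPoints

variable {F ψ : ℝ → ℝ} {k c : ℝ} (hF : ∀ t, 0 < t → HasDerivAt F (t ^ k * (ψ t - c)) t)
include hF

theorem deriv_eq_zero_iff_of_hasDerivAt {t : ℝ} (ht : 0 < t) : deriv F t = 0 ↔ ψ t = c := by
  rw [(hF t ht).deriv, mul_eq_zero, sub_eq_zero, or_iff_right (rpow_pos_of_pos ht k).ne']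

theorem isLocalMin_isLocalMax_of_crossings {t₁ t₂ : ℝ} (h₁ : 0 < t₁) (h₁₂ : t₁ < t₂)
    (hbelow : ∀ t, 0 < t → t < t₁ → ψ t < c) (habove : ∀ t, t₁ < t → t < t₂ → c < ψ t)
    (hbeyond : ∀ t, t₂ < t → ψ t < c) : IsLocalMin F t₁ ∧ IsLocalMax F t₂ := by
  have hdiff : ∀ s t, 0 ≤ s → DifferentiableOn ℝ F (Ioo s t) := fun s t hs x hx =>
    (hF x (hs.trans_lt hx.1)).differentiableAt.differentiableWithinAt
  have hdecr : ∀ t, 0 < t → ψ t < c → deriv F t ≤ 0 := fun t ht h => by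
    rw [(hF t ht).deriv]
    exact mul_nonpos_of_nonneg_of_nonpos (rpow_pos_of_pos ht k).le (sub_nonpos.2 h.le)
  have hincr : ∀ t, 0 < t → c < ψ t → 0 ≤ deriv F t := fun t ht h => by
    rw [(hF t ht).deriv]
    exact mul_nonneg (rpow_pos_of_pos ht k).le (sub_nonneg.2 h.le)
  have h₂ : 0 < t₂ := h₁.trans h₁₂
  refine ⟨isLocalMin_of_deriv_Ioo (half_lt_self h₁) h₁₂ (hF t₁ h₁).continuousAt
    (hdiff _ _ (half_pos h₁).le) (hdiff _ _ h₁.le) (fun t ht => ?_) (fun t ht => ?_),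
    isLocalMax_of_deriv_Ioo h₁₂ (lt_add_one t₂) (hF t₂ h₂).continuousAt
    (hdiff _ _ h₁.le) (hdiff _ _ h₂.le) (fun t ht => ?_) (fun t ht => ?_)⟩
  · have ht0 := (half_pos h₁).trans ht.1
    exact hdecr t ht0 (hbelow t ht0 ht.2)
  · exact hincr t (h₁.trans ht.1) (habove t ht.1 ht.2)
  · exact hincr t (h₁.trans ht.1) (habove t ht.1 ht.2)
  · exact hdecr t (h₂.trans ht.1) (hbeyond t ht.1)

theorem deriv_deriv_eq_zero_of_hasDerivAt_zero {T : ℝ} (hT : 0 < T) (hψ : HasDerivAt ψ 0 T)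
    (hc : ψ T = c) : deriv (deriv F) T = 0 := by
  have hdF : deriv F =ᶠ[𝓝 T] fun t => t ^ k * (ψ t - c) :=
    eventually_of_mem (Ioi_mem_nhds hT) fun t ht => (hF t ht).deriv
  have hprod : HasDerivAt (fun t => t ^ k * (ψ t - c))
      (k * T ^ (k - 1) * (ψ T - c) + T ^ k * 0) T :=
    (hasDerivAt_rpow_const (Or.inl hT.ne')).mul (hψ.sub_const c)
  rw [hdF.deriv_eq, hprod.deriv, hc]
  ring

end CriticalPoints

theorem rayleighNum_rayleighPeak_eq_mul_lamOf {X : Type*} [NormedAddCommGroup X]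
    [NormedSpace ℝ X] {A B E : X → ℝ} {α η β : ℝ} {u : X} (ha : 0 < A u) (hb : 0 < B u)
    (he : 0 < E u) (hαη : α < η) (hηβ : η < β) :
    rayleighNum (E u) (B u) (η - α) (β - α) (rayleighPeak (E u) (B u) (η - α) (β - α)) =
      A u * lamOf E A B α η β u := by
  rw [rayleighNum_rayleighPeak he hb (sub_pos.2 hαη) (by linarith),
    show β - α - (η - α) = β - η by ring, lamOf]
  field_simp

theorem statement_16_general
    {X : Type*} [NormedAddCommGroup X] [NormedSpace ℝ X]
    (A B E : X → ℝ) (α η β : ℝ)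
    (hApos : ∀ u : X, u ≠ 0 → 0 < A u)
    (hBpos : ∀ u : X, u ≠ 0 → 0 < B u)
    (hEpos : ∀ u : X, u ≠ 0 → 0 < E u)
    (hAhom : ∀ t : ℝ, 0 < t → ∀ u : X, u ≠ 0 → A (t • u) = t ^ α * A u)
    (hBhom : ∀ t : ℝ, 0 < t → ∀ u : X, u ≠ 0 → B (t • u) = t ^ β * B u)
    (hEhom : ∀ t : ℝ, 0 < t → ∀ u : X, u ≠ 0 → E (t • u) = t ^ η * E u)
    (hαη : α < η) (hηβ : η < β) (hα0 : α ≠ 0) (hη0 : η ≠ 0) (hβ0 : β ≠ 0)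
    :
    ∀ u : X, u ≠ 0 → ∀ l : ℝ, 0 < l →
      (l < lamOf E A B α η β u →
        ∃ t1 t2 : ℝ, 0 < t1 ∧ t1 < t2 ∧
          IsLocalMin (fun t : ℝ => PhiLam E A B α η β l (t • u)) t1 ∧
          IsLocalMax (fun t : ℝ => PhiLam E A B α η β l (t • u)) t2 ∧
          (∀ t : ℝ, 0 < t →
            (deriv (fun r : ℝ => PhiLam E A B α η β l (r • u)) t = 0 ↔
              t = t1 ∨ t = t2))) ∧
      (l = lamOf E A B α η β u →
        ∃ t0 : ℝ, 0 < t0 ∧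
          deriv (fun r : ℝ => PhiLam E A B α η β l (r • u)) t0 = 0 ∧
          deriv (deriv (fun r : ℝ => PhiLam E A B α η β l (r • u))) t0 = 0 ∧
          (∀ t : ℝ, 0 < t →
            deriv (fun r : ℝ => PhiLam E A B α η β l (r • u)) t = 0 → t = t0)) ∧
      (lamOf E A B α η β u < l →
        ∀ t : ℝ, 0 < t →
          deriv (fun r : ℝ => PhiLam E A B α η β l (r • u)) t ≠ 0) := by
  intro u hu l hl
  have ha := hApos u hu
  have he := hEpos u hu
  have hb := hBpos u hu
  have hp : 0 < η - α := sub_pos.2 hαη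
  have hpq : η - α < β - α := by linarith
  set ψ := rayleighNum (E u) (B u) (η - α) (β - α)
  set T := rayleighPeak (E u) (B u) (η - α) (β - α)
  have hF t (ht : 0 < t) := hasDerivAt_PhiLam_smul (l := l) hAhom hBhom hEhom hα0 hη0 hβ0 hu ht
  have hcrit t (ht : 0 < t) := deriv_eq_zero_iff_of_hasDerivAt hF ht
  have hT : 0 < T := rayleighPeak_pos he hb hp hpq
  have hpeak : ψ T = A u * lamOf E A B α η β u :=
    rayleighNum_rayleighPeak_eq_mul_lamOf ha hb he hαη hηβ
  have hlt_peak {t} (ht : 0 < t) (hne : t ≠ T) : ψ t < ψ T :=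
    rayleighNum_lt_rayleighNum_rayleighPeak he hb hp hpq ht.le hne
  refine ⟨fun hlt => ?_, fun heq => ?_, fun hgt t ht => ?_⟩
  · obtain ⟨t₁, t₂, h₁, h₁₂, hbelow, habove, hbeyond, hroots⟩ :=
      exists_rayleighNum_crossings he hb hp hpq (by positivity)
        (show l * A u < ψ T by rw [hpeak, mul_comm]; exact mul_lt_mul_of_pos_left hlt ha)
    obtain ⟨hmin, hmax⟩ := isLocalMin_isLocalMax_of_crossings hF h₁ h₁₂
      (fun t ht => hbelow t ht.le) habove hbeyond
    exact ⟨t₁, t₂, h₁, h₁₂, hmin, hmax, fun t ht => (hcrit t ht).trans (hroots t ht.le)⟩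
  · have hc : ψ T = l * A u := by rw [hpeak, heq, mul_comm]
    refine ⟨_, hT, (hcrit _ hT).2 hc,
      deriv_deriv_eq_zero_of_hasDerivAt_zero hF hT
        (hasDerivAt_rayleighNum_rayleighPeak he hb hp hpq) hc, fun t ht hdt => ?_⟩
    by_contra hne
    exact (hlt_peak ht hne).ne (((hcrit t ht).1 hdt).trans hc.symm)
  · intro hdt
    have hle : ψ t ≤ ψ T := by
      rcases eq_or_ne t T with rfl | hne
      exacts [le_rfl, (hlt_peak ht hne).le]
    rw [show ψ t = l * A u from (hcrit t ht).1 hdt, hpeak, mul_comm] at hle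
    exact absurd hle (not_le.2 (mul_lt_mul_of_pos_left hgt ha))

/-- for every `u ≠ 0` there is a threshold `λ(u)` such that the fibering
map `t ↦ Φ_λ(tu)` has exactly two critical points (a local minimum followed by a local
maximum) for `0 < λ < λ(u)`, exactly one, degenerate, critical point for `λ = λ(u)`,
and none for `λ > λ(u)`. -/
theorem statement_16
    {X : Type*} [NormedAddCommGroup X] [NormedSpace ℝ X]
    (A B E : X → ℝ) (α η β : ℝ)
    (hAC1 : ContDiffOn ℝ 1 A {x : X | x ≠ 0})
    (hBC1 : ContDiffOn ℝ 1 B {x : X | x ≠ 0})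
    (hEC1 : ContDiffOn ℝ 1 E {x : X | x ≠ 0})
    (hApos : ∀ u : X, u ≠ 0 → 0 < A u)
    (hBpos : ∀ u : X, u ≠ 0 → 0 < B u)
    (hEpos : ∀ u : X, u ≠ 0 → 0 < E u)
    (hAhom : ∀ t : ℝ, 0 < t → ∀ u : X, u ≠ 0 → A (t • u) = t ^ α * A u)
    (hBhom : ∀ t : ℝ, 0 < t → ∀ u : X, u ≠ 0 → B (t • u) = t ^ β * B u)
    (hEhom : ∀ t : ℝ, 0 < t → ∀ u : X, u ≠ 0 → E (t • u) = t ^ η * E u)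
    (hαη : α < η) (hηβ : η < β) (hα0 : α ≠ 0) (hη0 : η ≠ 0) (hβ0 : β ≠ 0)
    :
    ∀ u : X, u ≠ 0 → ∀ l : ℝ, 0 < l →
      (l < lamOf E A B α η β u →
        ∃ t1 t2 : ℝ, 0 < t1 ∧ t1 < t2 ∧
          IsLocalMin (fun t : ℝ => PhiLam E A B α η β l (t • u)) t1 ∧
          IsLocalMax (fun t : ℝ => PhiLam E A B α η β l (t • u)) t2 ∧
          (∀ t : ℝ, 0 < t →
            (deriv (fun r : ℝ => PhiLam E A B α η β l (r • u)) t = 0 ↔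
              t = t1 ∨ t = t2))) ∧
      (l = lamOf E A B α η β u →
        ∃ t0 : ℝ, 0 < t0 ∧
          deriv (fun r : ℝ => PhiLam E A B α η β l (r • u)) t0 = 0 ∧
          deriv (deriv (fun r : ℝ => PhiLam E A B α η β l (r • u))) t0 = 0 ∧
          (∀ t : ℝ, 0 < t →
            deriv (fun r : ℝ => PhiLam E A B α η β l (r • u)) t = 0 → t = t0)) ∧
      (lamOf E A B α η β u < l →
        ∀ t : ℝ, 0 < t →
          deriv (fun r : ℝ => PhiLam E A B α η β l (r • u)) t ≠ 0) :=
  statement_16_general A B E α η β hApos hBpos hEpos hAhom hBhom hEhom hαη hηβ hα0 hη0 hβ0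
end
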